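/- Let $t \ge 2$ and let $G$ be a simple graph on $n$ vertices such that the minimum of $\Phi(G,\cdot)$ over $\Delta^{n-1}$ equals $0$. If $x \in \Delta^{n-1}$ is a minimizer of $\Phi(G,\cdot)$ with minimal support (no minimizer has support strictly contained in $\operatorname{Supp}(x)$), then $x_v = \frac{1}{|\operatorname{Supp}(x)|}$ for every $v \in \operatorname{Supp}(x)$. -/

import Mathlib

open Finset
open scoped Classical

/-- The order of the largest clique of `G` containing the vertex `v`. -/
noncomputable def cliqueAt {n : ℕ} (G : SimpleGraph (Fin n)) (v : Fin n) : ℕ :=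
  ((univ : Finset (Finset (Fin n))).filter
    (fun s : Finset (Fin n) => G.IsClique (s : Set (Fin n)) ∧ v ∈ s)).sup Finset.card

/-- The set of copies of `K_t` in `G`, as `t`-element vertex sets inducing cliques. -/
noncomputable def ktCliques {n : ℕ} (G : SimpleGraph (Fin n)) (t : ℕ) :
    Finset (Finset (Fin n)) :=
  (univ : Finset (Finset (Fin n))).filter
    (fun s : Finset (Fin n) => s.card = t ∧ G.IsClique (s : Set (Fin n)))

/-- `N(G, K_t)`, the number of copies of `K_t` in `G`. -/
noncomputable def numKt {n : ℕ} (G : SimpleGraph (Fin n)) (t : ℕ) : ℕ :=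
  (ktCliques G t).card

/-- The standard simplex `Δ^{n-1}`. -/
def simplex (n : ℕ) : Set (Fin n → ℝ) :=
  {x | (∀ i, 0 ≤ x i) ∧ ∑ i, x i = 1}

/-- `Φ(G, x) = A(G,x) - B(G,x)`. -/
noncomputable def PhiFn {n : ℕ} (G : SimpleGraph (Fin n)) (t : ℕ) (x : Fin n → ℝ) : ℝ :=
  (∑ v, x v * ((cliqueAt G v).choose t : ℝ) / (cliqueAt G v : ℝ) ^ t)
    - ∑ s ∈ ktCliques G t, ∏ v ∈ s, x v

/-- The support of `x`, as a finset. -/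
noncomputable def suppF {n : ℕ} (x : Fin n → ℝ) : Finset (Fin n) :=
  (univ : Finset (Fin n)).filter (fun v => 0 < x v)

/-- `x` is a minimizer of `Φ(G, ·)` over the simplex. -/
def IsMinimizer {n : ℕ} (G : SimpleGraph (Fin n)) (t : ℕ) (x : Fin n → ℝ) : Prop :=
  x ∈ simplex n ∧ ∀ y ∈ simplex n, PhiFn G t x ≤ PhiFn G t y

/-- `δ_{ij}(x)`. -/
noncomputable def deltaFn {n : ℕ} (G : SimpleGraph (Fin n)) (t : ℕ) (x : Fin n → ℝ)
    (i j : Fin n) : ℝ :=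
  (((cliqueAt G i).choose t : ℝ) / (cliqueAt G i : ℝ) ^ t
      - ((cliqueAt G j).choose t : ℝ) / (cliqueAt G j : ℝ) ^ t)
    - ((∑ s ∈ (ktCliques G (t - 1)).filter (fun s => ∀ v ∈ s, G.Adj i v), ∏ v ∈ s, x v)
      - (∑ s ∈ (ktCliques G (t - 1)).filter (fun s => ∀ v ∈ s, G.Adj j v), ∏ v ∈ s, x v))

/-- `G` is a regular complete multipartite graph: the vertices can be colored so that
adjacency is exactly "different colors" and all color classes have the same size. -/
def IsRegularCompleteMultipartite {n : ℕ} (G : SimpleGraph (Fin n)) : Prop :=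
  ∃ (r : ℕ) (f : Fin n → Fin r),
    (∀ u v, G.Adj u v ↔ f u ≠ f v) ∧
    (∀ a b : Fin r,
      ((univ : Finset (Fin n)).filter (fun v => f v = a)).card =
        ((univ : Finset (Fin n)).filter (fun v => f v = b)).card)

/-!
Let `S` be the support of a minimal-support minimizer `x`. For `i ≠ j` in `S`, `Φ` along the
segment that moves mass between `x i` and `x j` is a quadratic in the moved amount whose leading
coefficient is a sum over the copies of `K_t` through `i` and `j` inside `S`. Were there no such
copy, `Φ` would be affine on the segment, hence constant, and the endpoint where `x j` vanishes
would be a minimizer with smaller support. So `S` is a clique of order `k ≥ t`, every `v ∈ S` has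
`c(v) ≥ k`, and as `C(m,t)/m^t` increases with `m`, `Φ(x) = 0` gives `e_t(x|_S) ≥ C(k,t)/k^t`.
By Maclaurin's inequality the reverse holds, strictly unless `x|_S` is uniform: moving two
coordinates on opposite sides of the mean towards it strictly increases `e_t` when `t ≥ 2`.
-/

section ElementarySymmetric

variable {ι R : Type*}

def esymmOn [CommSemiring R] (S : Finset ι) (r : ℕ) (x : ι → R) : R :=
  ∑ T ∈ S.powersetCard r, ∏ v ∈ T, x v

lemma esymmOn_congr [CommSemiring R] (S : Finset ι) (r : ℕ) {x y : ι → R}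
    (h : ∀ v ∈ S, x v = y v) : esymmOn S r x = esymmOn S r y :=
  sum_congr rfl fun _ hT => prod_congr rfl fun v hv => h v ((mem_powersetCard.1 hT).1 hv)

lemma esymmOn_of_eq_const [CommSemiring R] {S : Finset ι} (r : ℕ) {x : ι → R} {c : R}
    (h : ∀ v ∈ S, x v = c) : esymmOn S r x = S.card.choose r * c ^ r := by
  rw [esymmOn_congr S r h, esymmOn, sum_congr rfl fun T hT => by
    rw [prod_const, (mem_powersetCard.1 hT).2], sum_const, card_powersetCard, nsmul_eq_mul]

lemma esymmOn_pos {S : Finset ι} {r : ℕ} {x : ι → ℝ} (hx : ∀ v ∈ S, 0 < x v)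
    (hr : r ≤ S.card) : 0 < esymmOn S r x :=
  sum_pos (fun _ hT => prod_pos fun v hv => hx v ((mem_powersetCard.1 hT).1 hv))
    (powersetCard_nonempty.2 hr)

variable [DecidableEq ι]

lemma esymmOn_insert [CommSemiring R] {S : Finset ι} {i : ι} (hi : i ∉ S) (r : ℕ)
    (x : ι → R) :
    esymmOn (insert i S) (r + 1) x = esymmOn S (r + 1) x + x i * esymmOn S r x := by
  have hiT : ∀ T ∈ S.powersetCard r, i ∉ T := fun T hT h => hi ((mem_powersetCard.1 hT).1 h)
  rw [esymmOn, powersetCard_succ_insert hi, sum_union, sum_image, esymmOn, esymmOn, mul_sum]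
  · exact congrArg _ (sum_congr rfl fun T hT => prod_insert (hiT T hT))
  · intro T hT U hU hTU
    rw [← erase_insert (hiT T hT), ← erase_insert (hiT U hU), hTU]
  · refine disjoint_left.2 fun T hT hT' => ?_
    obtain ⟨U, -, rfl⟩ := mem_image.1 hT'
    exact hi ((mem_powersetCard.1 hT).1 (mem_insert_self i U))

lemma esymmOn_insert_insert [CommSemiring R] {S : Finset ι} {i j : ι} (hi : i ∉ S)
    (hj : j ∉ S) (hij : i ≠ j) (r : ℕ) (x : ι → R) :
    esymmOn (insert i (insert j S)) (r + 2) x = esymmOn S (r + 2) x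
      + (x i + x j) * esymmOn S (r + 1) x + x i * x j * esymmOn S r x := by
  rw [esymmOn_insert (by simp [hi, hij]), esymmOn_insert hj, esymmOn_insert hj]
  ring

end ElementarySymmetric

section Transfer

variable {ι : Type*} [DecidableEq ι]

noncomputable def transfer (x : ι → ℝ) (i j : ι) (ε : ℝ) : ι → ℝ :=
  Function.update (Function.update x j (x j - ε)) i (x i + ε)

variable {x : ι → ℝ} {i j : ι} {ε : ℝ}

@[simp] lemma transfer_apply_left : transfer x i j ε i = x i + ε := by
  simp [transfer]

@[simp] lemma transfer_apply_right (hij : i ≠ j) : transfer x i j ε j = x j - ε := by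
  simp [transfer, hij.symm]

lemma transfer_apply_of_ne {v : ι} (hi : v ≠ i) (hj : v ≠ j) : transfer x i j ε v = x v := by
  simp [transfer, hi, hj]

lemma sum_transfer_mul {S : Finset ι} (hi : i ∈ S) (hj : j ∈ S) (hij : i ≠ j) (w : ι → ℝ) :
    ∑ v ∈ S, transfer x i j ε v * w v = ∑ v ∈ S, x v * w v + ε * (w i - w j) := by
  have key : ∀ v, transfer x i j ε v * w v
      = x v * w v + ((if v = i then ε * w i else 0) - (if v = j then ε * w j else 0)) := by
    intro v
    by_cases hvi : v = i
    · subst hvi; simp [hij]; ring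
    by_cases hvj : v = j
    · subst hvj; simp [hvi, hij]; ring
    simp [transfer_apply_of_ne hvi hvj, hvi, hvj]
  rw [sum_congr rfl fun v _ => key v, sum_add_distrib, sum_sub_distrib, sum_ite_eq',
    sum_ite_eq', if_pos hi, if_pos hj]
  ring

lemma sum_transfer {S : Finset ι} (hi : i ∈ S) (hj : j ∈ S) (hij : i ≠ j) :
    ∑ v ∈ S, transfer x i j ε v = ∑ v ∈ S, x v := by
  simpa using sum_transfer_mul (x := x) (ε := ε) hi hj hij fun _ => 1

lemma prod_transfer (hij : i ≠ j) (s : Finset ι) :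
    ∃ d : ℝ, ∀ ε, ∏ v ∈ s, transfer x i j ε v = ∏ v ∈ s, x v + ε * d
      - ε ^ 2 * if i ∈ s ∧ j ∈ s then ∏ v ∈ (s.erase i).erase j, x v else 0 := by
  have hrest : ∀ (ε : ℝ) (T : Finset ι), (∀ v ∈ T, v ≠ i ∧ v ≠ j) →
      ∏ v ∈ T, transfer x i j ε v = ∏ v ∈ T, x v := fun ε T hT =>
    prod_congr rfl fun v hv => transfer_apply_of_ne (hT v hv).1 (hT v hv).2
  by_cases hi : i ∈ s <;> by_cases hj : j ∈ s
  · have hji : j ∈ s.erase i := mem_erase.2 ⟨hij.symm, hj⟩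
    refine ⟨(x j - x i) * ∏ v ∈ (s.erase i).erase j, x v, fun ε => ?_⟩
    rw [if_pos ⟨hi, hj⟩, ← mul_prod_erase s _ hi, ← mul_prod_erase (s.erase i) _ hji,
      ← mul_prod_erase s x hi, ← mul_prod_erase (s.erase i) x hji,
      hrest ε _ fun v hv => ⟨ne_of_mem_erase (mem_of_mem_erase hv), ne_of_mem_erase hv⟩,
      transfer_apply_left, transfer_apply_right hij]
    ring
  · refine ⟨∏ v ∈ s.erase i, x v, fun ε => ?_⟩
    rw [if_neg fun h => hj h.2, ← mul_prod_erase s _ hi, ← mul_prod_erase s x hi,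
      hrest ε _ fun v hv => ⟨ne_of_mem_erase hv, fun h => hj (h ▸ mem_of_mem_erase hv)⟩,
      transfer_apply_left]
    ring
  · refine ⟨-∏ v ∈ s.erase j, x v, fun ε => ?_⟩
    rw [if_neg fun h => hi h.1, ← mul_prod_erase s _ hj, ← mul_prod_erase s x hj,
      hrest ε _ fun v hv => ⟨fun h => hi (h ▸ mem_of_mem_erase hv), ne_of_mem_erase hv⟩,
      transfer_apply_right hij]
    ring
  · refine ⟨0, fun ε => ?_⟩
    rw [if_neg fun h => hi h.1,
      hrest ε s fun v hv => ⟨fun h => hi (h ▸ hv), fun h => hj (h ▸ hv)⟩]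
    ring

end Transfer

section Maclaurin

variable {ι : Type*} {S : Finset ι} {x : ι → ℝ}

lemma exists_lt_and_exists_gt_of_sum_eq_card_mul {u : ℝ} (hsum : ∑ v ∈ S, x v = S.card * u)
    (hne : ∃ v ∈ S, x v ≠ u) : (∃ j ∈ S, x j < u) ∧ ∃ i ∈ S, u < x i := by
  obtain ⟨v, hv, hvu⟩ := hne
  have hS : ∑ v ∈ S, x v = ∑ _v ∈ S, u := by simp [hsum]
  constructor
  · by_contra! h
    exact (sum_lt_sum h ⟨v, hv, lt_of_le_of_ne (h v hv) hvu.symm⟩).ne' hS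
  · by_contra! h
    exact (sum_lt_sum h ⟨v, hv, lt_of_le_of_ne (h v hv) hvu⟩).ne hS

variable [DecidableEq ι]

lemma esymmOn_lt_esymmOn_transfer {i j : ι} (hi : i ∈ S) (hj : j ∈ S) (hij : i ≠ j)
    (hpos : ∀ v ∈ S, 0 < x v) {r : ℕ} (hr : r + 2 ≤ S.card) {ε : ℝ} (hε : 0 < ε)
    (hεx : ε < x i - x j) : esymmOn S (r + 2) x < esymmOn S (r + 2) (transfer x j i ε) := by
  set R := (S.erase i).erase j
  have hjR : j ∉ R := notMem_erase j _
  have hiR : i ∉ R := fun h => notMem_erase i S (mem_of_mem_erase h)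
  have hS : S = insert i (insert j R) := by
    rw [insert_erase (mem_erase.2 ⟨hij.symm, hj⟩), insert_erase hi]
  have hRpos : 0 < esymmOn R r x := by
    refine esymmOn_pos (fun v hv => hpos v (mem_of_mem_erase (mem_of_mem_erase hv))) ?_
    rw [card_erase_of_mem (mem_erase.2 ⟨hij.symm, hj⟩), card_erase_of_mem hi]
    omega
  have hyR : ∀ k, esymmOn R k (transfer x j i ε) = esymmOn R k x := fun k =>
    esymmOn_congr R k fun v hv =>
      transfer_apply_of_ne (ne_of_mem_erase hv) (ne_of_mem_erase (mem_of_mem_erase hv))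
  rw [hS, esymmOn_insert_insert hiR hjR hij, esymmOn_insert_insert hiR hjR hij, hyR, hyR, hyR,
    transfer_apply_left, transfer_apply_right hij.symm]
  -- the transfer keeps `x i + x j` and raises `x i * x j` by `ε * (x i - x j - ε)`
  nlinarith [mul_pos (mul_pos hε (sub_pos.2 hεx)) hRpos]

lemma exists_esymmOn_lt_of_ne_mean {u : ℝ} {t : ℕ} (ht : 2 ≤ t) (htS : t ≤ S.card)
    (hpos : ∀ v ∈ S, 0 < x v) (hsum : ∑ v ∈ S, x v = S.card * u) (hne : ∃ v ∈ S, x v ≠ u) :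
    ∃ y : ι → ℝ, (∀ v ∈ S, 0 < y v) ∧ ∑ v ∈ S, y v = S.card * u ∧
      #{v ∈ S | y v ≠ u} < #{v ∈ S | x v ≠ u} ∧ esymmOn S t x < esymmOn S t y := by
  obtain ⟨⟨j, hj, hju⟩, ⟨i, hi, hiu⟩⟩ := exists_lt_and_exists_gt_of_sum_eq_card_mul hsum hne
  have hij : i ≠ j := by rintro rfl; linarith
  set ε := min (x i - u) (u - x j)
  have hε : 0 < ε := lt_min (by linarith) (by linarith)
  have hεi : ε ≤ x i - u := min_le_left _ _
  have hεj : ε ≤ u - x j := min_le_right _ _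
  set y := transfer x j i ε
  have hyi : y i = x i - ε := transfer_apply_right hij.symm
  have hyj : y j = x j + ε := transfer_apply_left
  have hyv : ∀ v, v ≠ i → v ≠ j → y v = x v := fun v hvi hvj => transfer_apply_of_ne hvj hvi
  refine ⟨y, fun v hv => ?_, ?_, card_lt_card ?_, ?_⟩
  · by_cases hvi : v = i
    · subst hvi; linarith [hyi, hpos j hj]
    by_cases hvj : v = j
    · subst hvj; linarith [hyj, hpos v hv]
    rw [hyv v hvi hvj]; exact hpos v hv
  · rwa [sum_transfer hj hi hij.symm]
  · refine (ssubset_iff_of_subset fun v hv => ?_).2 ?_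
    · simp only [mem_filter] at hv ⊢
      refine ⟨hv.1, ?_⟩
      by_cases hvi : v = i
      · subst hvi; exact hiu.ne'
      by_cases hvj : v = j
      · subst hvj; exact hju.ne
      rw [← hyv v hvi hvj]; exact hv.2
    · rcases min_choice (x i - u) (u - x j) with h | h
      · exact ⟨i, by simp [hi, hiu.ne'], by simp [hyi, ε, h]⟩
      · exact ⟨j, by simp [hj, hju.ne], by simp [hyj, ε, h]⟩
  · obtain ⟨r, rfl⟩ := Nat.exists_eq_add_of_le' ht
    exact esymmOn_lt_esymmOn_transfer hi hj hij hpos htS hε (by linarith)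

theorem esymmOn_lt_choose_mul_pow {u : ℝ} {t : ℕ} (ht : 2 ≤ t) (htS : t ≤ S.card)
    (hpos : ∀ v ∈ S, 0 < x v) (hsum : ∑ v ∈ S, x v = S.card * u) (hne : ∃ v ∈ S, x v ≠ u) :
    esymmOn S t x < S.card.choose t * u ^ t := by
  induction hm : #{v ∈ S | x v ≠ u} using Nat.strong_induction_on generalizing x with
  | _ m ih =>
    obtain ⟨y, hypos, hysum, hcard, hlt⟩ := exists_esymmOn_lt_of_ne_mean ht htS hpos hsum hne
    refine hlt.trans_le ?_
    by_cases hyne : ∃ v ∈ S, y v ≠ u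
    · exact (ih _ (hm ▸ hcard) hypos hysum hyne rfl).le
    · push Not at hyne
      exact (esymmOn_of_eq_const t hyne).le

end Maclaurin

lemma choose_div_pow_le_choose_div_pow {t k m : ℕ} (hk : t ≤ k) (hkm : k ≤ m) :
    (k.choose t : ℝ) / (k : ℝ) ^ t ≤ (m.choose t : ℝ) / (m : ℝ) ^ t := by
  rcases Nat.eq_zero_or_pos t with rfl | ht
  · simp
  have hk0 : (0 : ℝ) < k := by exact_mod_cast ht.trans_le hk
  have hm0 : (0 : ℝ) < m := hk0.trans_le (by exact_mod_cast hkm)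
  rw [div_le_div_iff₀ (by positivity) (by positivity)]
  have hdesc : k.descFactorial t * m ^ t ≤ m.descFactorial t * k ^ t := by
    have hpow (a : ℕ) : a ^ t = ∏ _i ∈ range t, a := by simp
    rw [Nat.descFactorial_eq_prod_range, Nat.descFactorial_eq_prod_range, hpow m, hpow k,
      ← prod_mul_distrib, ← prod_mul_distrib]
    refine prod_le_prod' fun i _ => ?_
    rw [Nat.sub_mul, Nat.sub_mul, Nat.mul_comm k m]
    exact Nat.sub_le_sub_left (Nat.mul_le_mul_left i hkm) _
  rw [Nat.descFactorial_eq_factorial_mul_choose, Nat.descFactorial_eq_factorial_mul_choose,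
    mul_assoc, mul_assoc] at hdesc
  exact_mod_cast Nat.le_of_mul_le_mul_left hdesc (Nat.factorial_pos t)

section Graph

variable {n : ℕ}

lemma mem_suppF {x : Fin n → ℝ} {v : Fin n} : v ∈ suppF x ↔ 0 < x v := by
  simp [suppF]

lemma eq_zero_of_notMem_suppF {x : Fin n → ℝ} (hx : x ∈ simplex n) {v : Fin n}
    (hv : v ∉ suppF x) : x v = 0 :=
  le_antisymm (not_lt.1 (mt mem_suppF.2 hv)) (hx.1 v)

lemma sum_suppF {x : Fin n → ℝ} (hx : x ∈ simplex n) : ∑ v ∈ suppF x, x v = 1 := by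
  rw [sum_subset (subset_univ _) fun v _ => eq_zero_of_notMem_suppF hx]
  exact hx.2

lemma mem_ktCliques {G : SimpleGraph (Fin n)} {t : ℕ} {s : Finset (Fin n)} :
    s ∈ ktCliques G t ↔ s.card = t ∧ G.IsClique (s : Set (Fin n)) := by
  simp [ktCliques]

lemma transfer_mem_simplex {x : Fin n → ℝ} (hx : x ∈ simplex n) {i j : Fin n} (hij : i ≠ j)
    {ε : ℝ} (hεi : -x i ≤ ε) (hεj : ε ≤ x j) : transfer x i j ε ∈ simplex n := by
  refine ⟨fun v => ?_, by rw [sum_transfer (mem_univ i) (mem_univ j) hij, hx.2]⟩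
  by_cases hvi : v = i
  · subst hvi; simp; linarith
  by_cases hvj : v = j
  · subst hvj; simp [transfer_apply_right hij]; linarith
  rw [transfer_apply_of_ne hvi hvj]; exact hx.1 v

lemma suppF_transfer_subset_erase {x : Fin n → ℝ} {i j : Fin n} (hij : i ≠ j)
    (hi : i ∈ suppF x) : suppF (transfer x i j (x j)) ⊆ (suppF x).erase j := by
  intro v hv
  rw [mem_suppF] at hv
  by_cases hvi : v = i
  · exact hvi ▸ mem_erase.2 ⟨hij, hi⟩
  by_cases hvj : v = j
  · simp [hvj, transfer_apply_right hij] at hv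
  rw [transfer_apply_of_ne hvi hvj] at hv
  exact mem_erase.2 ⟨hvj, mem_suppF.2 hv⟩

noncomputable def cliqueWeight (G : SimpleGraph (Fin n)) (t : ℕ) (v : Fin n) : ℝ :=
  ((cliqueAt G v).choose t : ℝ) / (cliqueAt G v : ℝ) ^ t

lemma PhiFn_eq (G : SimpleGraph (Fin n)) (t : ℕ) (x : Fin n → ℝ) :
    PhiFn G t x = ∑ v, x v * cliqueWeight G t v - ∑ s ∈ ktCliques G t, ∏ v ∈ s, x v := by
  simp only [PhiFn, cliqueWeight, mul_div_assoc]

lemma card_le_cliqueAt {G : SimpleGraph (Fin n)} {S : Finset (Fin n)}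
    (hS : G.IsClique (S : Set (Fin n))) {v : Fin n} (hv : v ∈ S) : S.card ≤ cliqueAt G v :=
  le_sup (mem_filter.2 ⟨mem_univ _, hS, hv⟩)

lemma PhiFn_transfer (G : SimpleGraph (Fin n)) (t : ℕ) (x : Fin n → ℝ) {i j : Fin n}
    (hij : i ≠ j) : ∃ D : ℝ, ∀ ε, PhiFn G t (transfer x i j ε) = PhiFn G t x + ε * D
      + ε ^ 2 * ∑ s ∈ ktCliques G t,
        if i ∈ s ∧ j ∈ s then ∏ v ∈ (s.erase i).erase j, x v else 0 := by
  choose d hd using prod_transfer (x := x) hij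
  refine ⟨cliqueWeight G t i - cliqueWeight G t j - ∑ s ∈ ktCliques G t, d s, fun ε => ?_⟩
  rw [PhiFn_eq, PhiFn_eq, sum_transfer_mul (mem_univ i) (mem_univ j) hij,
    sum_congr rfl fun s _ => hd s ε, sum_sub_distrib, sum_add_distrib, ← mul_sum, ← mul_sum]
  ring

section MinimalSupport

variable {G : SimpleGraph (Fin n)} {t : ℕ} {x : Fin n → ℝ} (hx : IsMinimizer G t x)
  (hmin : ∀ y : Fin n → ℝ, IsMinimizer G t y → ¬ suppF y ⊂ suppF x)
include hx hmin

lemma exists_ktClique_of_minimal_support {i j : Fin n} (hi : i ∈ suppF x) (hj : j ∈ suppF x)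
    (hij : i ≠ j) : ∃ s ∈ ktCliques G t, i ∈ s ∧ j ∈ s ∧ s ⊆ suppF x := by
  by_contra! hno
  obtain ⟨D, hD⟩ := PhiFn_transfer G t x hij
  have hquad : ∑ s ∈ ktCliques G t,
      (if i ∈ s ∧ j ∈ s then ∏ v ∈ (s.erase i).erase j, x v else 0) = 0 := by
    refine sum_eq_zero fun s hs => ?_
    split_ifs with h
    · obtain ⟨v, hvs, hv⟩ := not_subset.1 (hno s hs h.1 h.2)
      refine prod_eq_zero (mem_erase.2 ⟨?_, mem_erase.2 ⟨?_, hvs⟩⟩)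
        (eq_zero_of_notMem_suppF hx.1 hv)
      · rintro rfl; exact hv hj
      · rintro rfl; exact hv hi
    · rfl
  simp only [hquad, mul_zero, add_zero] at hD
  have hxi := mem_suppF.1 hi
  have hxj := mem_suppF.1 hj
  have hleft := hx.2 _ (transfer_mem_simplex (ε := -x i) hx.1 hij le_rfl (by linarith))
  have hright := hx.2 _ (transfer_mem_simplex (ε := x j) hx.1 hij (by linarith) le_rfl)
  rw [hD] at hleft hright
  have hD0 : D = 0 := by nlinarith
  refine hmin _ ⟨transfer_mem_simplex hx.1 hij (by linarith) le_rfl, fun y hy => ?_⟩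
    ((suppF_transfer_subset_erase hij hi).trans_ssubset (erase_ssubset hj))
  rw [hD, hD0, mul_zero, add_zero]
  exact hx.2 y hy

lemma isClique_suppF : G.IsClique (suppF x : Set (Fin n)) := fun i hi j hj hij => by
  obtain ⟨s, hs, his, hjs, -⟩ := exists_ktClique_of_minimal_support hx hmin hi hj hij
  exact (mem_ktCliques.1 hs).2 his hjs hij

lemma le_card_suppF (h : 1 < (suppF x).card) : t ≤ (suppF x).card := by
  obtain ⟨i, hi, j, hj, hij⟩ := one_lt_card.1 h
  obtain ⟨s, hs, -, -, hsS⟩ := exists_ktClique_of_minimal_support hx hmin hi hj hij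
  exact (mem_ktCliques.1 hs).1 ▸ card_le_card hsS

end MinimalSupport

lemma sum_ktCliques_prod_eq_esymmOn {G : SimpleGraph (Fin n)} {S : Finset (Fin n)}
    (hS : G.IsClique (S : Set (Fin n))) (t : ℕ) {x : Fin n → ℝ} (hx : ∀ v ∉ S, x v = 0) :
    ∑ s ∈ ktCliques G t, ∏ v ∈ s, x v = esymmOn S t x := by
  refine (sum_subset (fun s hs => ?_) fun s hs hsS => ?_).symm
  · obtain ⟨hsS, hst⟩ := mem_powersetCard.1 hs
    exact mem_ktCliques.2 ⟨hst, hS.subset (by simpa using hsS)⟩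
  · obtain ⟨v, hvs, hv⟩ :=
      not_subset.1 fun h => hsS (mem_powersetCard.2 ⟨h, (mem_ktCliques.1 hs).1⟩)
    exact prod_eq_zero hvs (hx v hv)

lemma choose_div_pow_le_sum_mul_cliqueWeight {G : SimpleGraph (Fin n)} {S : Finset (Fin n)}
    (hS : G.IsClique (S : Set (Fin n))) {t : ℕ} (htS : t ≤ S.card) {x : Fin n → ℝ}
    (hx0 : ∀ v, 0 ≤ x v) (hoff : ∀ v ∉ S, x v = 0) (hsum : ∑ v ∈ S, x v = 1) :
    (S.card.choose t : ℝ) / (S.card : ℝ) ^ t ≤ ∑ v, x v * cliqueWeight G t v := by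
  rw [← sum_subset (subset_univ S) fun v _ hv => by rw [hoff v hv, zero_mul], ← mul_one (_ / _),
    ← hsum, mul_sum]
  exact sum_le_sum fun v hv => by
    rw [mul_comm]
    exact mul_le_mul_of_nonneg_left
      (choose_div_pow_le_choose_div_pow htS (card_le_cliqueAt hS hv)) (hx0 v)

end Graph

/-- If the minimum of `Φ(G, ·)` over the simplex is `0`, then a minimal-support minimizer
is uniform on its support. -/
theorem stmt8 {n : ℕ} (t : ℕ) (ht : 2 ≤ t) (G : SimpleGraph (Fin n))
    (x : Fin n → ℝ) (hx : IsMinimizer G t x) (h0 : PhiFn G t x = 0)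
    (hmin : ∀ y : Fin n → ℝ, IsMinimizer G t y → ¬ suppF y ⊂ suppF x) :
    ∀ v ∈ suppF x, x v = 1 / ((suppF x).card : ℝ) := by
  have hoff : ∀ v ∉ suppF x, x v = 0 := fun v => eq_zero_of_notMem_suppF hx.1
  have hsum := sum_suppF hx.1
  intro v hv
  rcases le_or_gt (suppF x).card 1 with hS1 | hS1
  · obtain hSv : suppF x = {v} :=
      eq_singleton_iff_unique_mem.2 ⟨hv, fun w hw => card_le_one.1 hS1 w hw v hv⟩
    simpa [hSv] using hsum
  have hS := isClique_suppF hx hmin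
  have htS := le_card_suppF hx hmin hS1
  by_contra hne
  have hlt := esymmOn_lt_choose_mul_pow (u := 1 / (suppF x).card) ht htS (fun w => mem_suppF.1)
    (by rw [hsum]; field_simp) ⟨v, hv, hne⟩
  have hle := choose_div_pow_le_sum_mul_cliqueWeight hS htS hx.1.1 hoff hsum
  rw [PhiFn_eq, sum_ktCliques_prod_eq_esymmOn hS t hoff] at h0
  rw [one_div_pow, mul_one_div] at hlt
  linarith
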